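/- Let 𝔤 be a finite-dimensional complex Lie algebra with no Lie ideal of dimension 1, and let H = H(𝔤). If w is a nonzero element of the degree-one subspace V of H which is normal in H, i.e. the set {w·a : a ∈ H} equals the set {a·w : a ∈ H}, then w is a scalar multiple of z. -/

import Mathlib

open TensorAlgebra

/-- The defining relations of the homogenization `H(𝔤)` of the universal enveloping
algebra of a Lie algebra `L`, inside the tensor algebra on `L × ℂ`. -/
inductive HomogRel (L : Type) [LieRing L] [LieAlgebra ℂ L] :
    TensorAlgebra ℂ (L × ℂ) → TensorAlgebra ℂ (L × ℂ) → Prop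
  | central (b : L) :
      HomogRel L (ι ℂ ((b, 0) : L × ℂ) * ι ℂ ((0, 1) : L × ℂ))
        (ι ℂ ((0, 1) : L × ℂ) * ι ℂ ((b, 0) : L × ℂ))
  | lie (b c : L) :
      HomogRel L (ι ℂ ((b, 0) : L × ℂ) * ι ℂ ((c, 0) : L × ℂ))
        (ι ℂ ((c, 0) : L × ℂ) * ι ℂ ((b, 0) : L × ℂ) +
          ι ℂ ((⁅b, c⁆, 0) : L × ℂ) * ι ℂ ((0, 1) : L × ℂ))

/-- The homogenization `H(𝔤)` of the universal enveloping algebra of `L`. -/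
abbrev Homog (L : Type) [LieRing L] [LieAlgebra ℂ L] : Type := RingQuot (HomogRel L)

/-- The central element `z` of `H(𝔤)`. -/
noncomputable def homogZ (L : Type) [LieRing L] [LieAlgebra ℂ L] : Homog L :=
  RingQuot.mkAlgHom ℂ (HomogRel L) (ι ℂ ((0, 1) : L × ℂ))

/-- The degree-one subspace `V` of `H(𝔤)`, the image of `𝔤 ⊕ ℂ`. -/
noncomputable def homogV (L : Type) [LieRing L] [LieAlgebra ℂ L] : Submodule ℂ (Homog L) :=
  LinearMap.range ((RingQuot.mkAlgHom ℂ (HomogRel L)).toLinearMap ∘ₗ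
    (ι ℂ : (L × ℂ) →ₗ[ℂ] TensorAlgebra ℂ (L × ℂ)))

open scoped TensorProduct

variable (L : Type) [LieRing L] [LieAlgebra ℂ L]

noncomputable def homogM : (L × ℂ) →ₗ[ℂ] (L × ℂ) →ₗ[ℂ] ((L ⊗[ℂ] L) × L × ℂ) :=
  LinearMap.mk₂ ℂ
    (fun v u => (v.1 ⊗ₜ[ℂ] u.1 + u.1 ⊗ₜ[ℂ] v.1,
      ((2⁻¹ : ℂ) • ⁅v.1, u.1⁆ + v.2 • u.1 + u.2 • v.1, v.2 * u.2)))
    (by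
      intro a b c
      simp only [Prod.fst_add, Prod.snd_add, Prod.mk_add_mk, Prod.ext_iff,
        TensorProduct.add_tmul, TensorProduct.tmul_add, add_lie, smul_add, add_smul]
      refine ⟨by abel_nf, by module, by ring⟩)
    (by
      intro t a c
      simp only [Prod.smul_fst, Prod.smul_snd, Prod.smul_mk, Prod.ext_iff,
        TensorProduct.smul_tmul', TensorProduct.tmul_smul, smul_lie, smul_add, smul_smul,
        smul_eq_mul]
      refine ⟨by trivial, by module, by ring⟩)
    (by
      intro a b c
      simp only [Prod.fst_add, Prod.snd_add, Prod.mk_add_mk, Prod.ext_iff,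
        TensorProduct.add_tmul, TensorProduct.tmul_add, lie_add, smul_add, add_smul]
      refine ⟨by abel_nf, by module, by ring⟩)
    (by
      intro t a c
      simp only [Prod.smul_fst, Prod.smul_snd, Prod.smul_mk, Prod.ext_iff,
        TensorProduct.smul_tmul', TensorProduct.tmul_smul, lie_smul, smul_add, smul_smul,
        smul_eq_mul]
      refine ⟨by trivial, by module, by ring⟩)

abbrev HomogX := ℂ × (L × ℂ) × ((L ⊗[ℂ] L) × L × ℂ)

noncomputable def homogLop : (L × ℂ) →ₗ[ℂ] Module.End ℂ (HomogX L) where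
  toFun v :=
    { toFun := fun x => (0, x.1 • v, homogM L v x.2.1)
      map_add' := by
        intro x y
        simp only [Prod.fst_add, Prod.snd_add, map_add, add_smul, Prod.mk_add_mk, add_zero]
      map_smul' := by
        intro t x
        simp only [Prod.smul_fst, Prod.smul_snd, map_smul, smul_smul, Prod.smul_mk,
          RingHom.id_apply, smul_zero, smul_eq_mul, mul_zero] }
  map_add' := by
    intro v u
    refine LinearMap.ext fun x => ?_
    simp only [LinearMap.add_apply, LinearMap.coe_mk, AddHom.coe_mk]
    simp only [map_add, LinearMap.add_apply, smul_add, Prod.mk_add_mk, add_zero]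
  map_smul' := by
    intro t v
    refine LinearMap.ext fun x => ?_
    simp only [LinearMap.smul_apply, LinearMap.coe_mk, AddHom.coe_mk, RingHom.id_apply]
    simp only [map_smul, LinearMap.smul_apply, Prod.smul_mk, smul_zero, smul_comm x.1 t]

lemma homogLop_mul_apply (v u : L × ℂ) (x : HomogX L) :
    (homogLop L v * homogLop L u) x = (0, 0, x.1 • homogM L v u) := by
  show homogLop L v (homogLop L u x) = _
  simp only [homogLop, LinearMap.coe_mk, AddHom.coe_mk]
  simp only [map_smul, zero_smul]

lemma homogM_rel_central (b : L) :
    homogM L ((b, 0) : L × ℂ) ((0, 1) : L × ℂ) = homogM L ((0, 1) : L × ℂ) ((b, 0) : L × ℂ) := by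
  simp only [homogM, LinearMap.mk₂_apply, Prod.ext_iff]
  refine ⟨by simp, by simp [lie_zero, zero_lie], by ring⟩

lemma homogM_rel_lie (b c : L) :
    homogM L ((b, 0) : L × ℂ) ((c, 0) : L × ℂ) =
      homogM L ((c, 0) : L × ℂ) ((b, 0) : L × ℂ) +
        homogM L ((⁅b, c⁆, 0) : L × ℂ) ((0, 1) : L × ℂ) := by
  simp only [homogM, LinearMap.mk₂_apply, Prod.mk_add_mk, Prod.ext_iff]
  refine ⟨by simp [TensorProduct.zero_tmul]; abel_nf, ?_, by ring⟩
  simp only [zero_smul, add_zero, zero_add, one_smul, smul_zero, lie_zero, zero_lie]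
  rw [← lie_skew c b]
  module

noncomputable def homogPhi : Homog L →ₐ[ℂ] Module.End ℂ (HomogX L) :=
  RingQuot.liftAlgHom ℂ ⟨TensorAlgebra.lift ℂ (homogLop L), by
    rintro x y (⟨b⟩ | ⟨b, c⟩) <;>
      simp only [map_mul, map_add, TensorAlgebra.lift_ι_apply] <;>
      refine LinearMap.ext fun x => ?_
    · rw [homogLop_mul_apply, homogLop_mul_apply, homogM_rel_central]
    · rw [homogLop_mul_apply, LinearMap.add_apply, homogLop_mul_apply, homogLop_mul_apply,
        homogM_rel_lie]
      simp only [smul_add, Prod.mk_add_mk, add_zero]⟩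

lemma homogPhi_mk (v : L × ℂ) :
    homogPhi L (RingQuot.mkAlgHom ℂ (HomogRel L) (ι ℂ v)) = homogLop L v := by
  simp only [homogPhi, RingQuot.liftAlgHom_mkAlgHom_apply, TensorAlgebra.lift_ι_apply]

lemma homogLop_apply (v : L × ℂ) (x : HomogX L) :
    homogLop L v x = (0, x.1 • v, homogM L v x.2.1) := rfl

lemma homogM_apply (v u : L × ℂ) :
    homogM L v u = (v.1 ⊗ₜ[ℂ] u.1 + u.1 ⊗ₜ[ℂ] v.1,
      ((2⁻¹ : ℂ) • ⁅v.1, u.1⁆ + v.2 • u.1 + u.2 • v.1, v.2 * u.2)) := rfl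

lemma tensor_cancel {L : Type} [LieRing L] [LieAlgebra ℂ L] {b x : L} (hb : b ≠ 0)
    (h : b ⊗ₜ[ℂ] x + x ⊗ₜ[ℂ] b = 0) : x = 0 := by
  obtain ⟨f, hf⟩ : ∃ f : Module.Dual ℂ L, f b ≠ 0 := by
    by_contra hc; push_neg at hc
    exact hb ((Module.forall_dual_apply_eq_zero_iff ℂ b).mp hc)
  have hC := congrArg (TensorProduct.lift
    (LinearMap.mk₂ ℂ (fun a c => f a * f c)
      (by intro a b c; simp [add_mul]) (by intro t a c; simp; ring)
      (by intro a b c; simp [mul_add]) (by intro t a c; simp; ring))) h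
  rw [map_add, map_zero, TensorProduct.lift.tmul, TensorProduct.lift.tmul,
    LinearMap.mk₂_apply, LinearMap.mk₂_apply] at hC
  have hfx : f x = 0 := by
    have h2 : f b * f x * 2 = 0 := by linear_combination hC
    rcases mul_eq_zero.mp h2 with h3 | h3
    · rcases mul_eq_zero.mp h3 with h4 | h4
      · exact absurd h4 hf
      · exact h4
    · norm_num at h3
  have hB := congrArg (TensorProduct.lift
    (LinearMap.mk₂ ℂ (fun a c => f a • c)
      (by intro a b c; rw [map_add, add_smul])
      (by intro t a c; rw [map_smul, smul_eq_mul, mul_smul])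
      (by intro a b c; rw [smul_add])
      (by intro t a c; rw [smul_comm]))) h
  rw [map_add, map_zero, TensorProduct.lift.tmul, TensorProduct.lift.tmul,
    LinearMap.mk₂_apply, LinearMap.mk₂_apply, hfx, zero_smul, add_zero] at hB
  exact (smul_eq_zero.mp hB).resolve_left hf


theorem stmt3 (L : Type) [LieRing L] [LieAlgebra ℂ L] [FiniteDimensional ℂ L]
    (hL : ∀ I : LieIdeal ℂ L, Module.finrank ℂ I ≠ 1)
    (w : Homog L) (hw : w ∈ homogV L) (hw0 : w ≠ 0)
    (hnormal : Set.range (fun a : Homog L => w * a) = Set.range (fun a : Homog L => a * w)) :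
    ∃ c : ℂ, w = c • homogZ L := by
  obtain ⟨v, hv⟩ := hw
  by_cases hb : v.1 = 0
  · refine ⟨v.2, ?_⟩
    have hveq : v = v.2 • ((0 : L), (1 : ℂ)) := by
      ext
      · simp [hb]
      · simp
    conv_lhs => rw [← hv, hveq, map_smul]
    rfl
  · exfalso
    have hφw : homogPhi L w = homogLop L v := by
      rw [← hv]
      exact homogPhi_mk L v
    have key : ∀ c : L, ∃ μ : ℂ, ⁅c, v.1⁆ = μ • v.1 := by
      intro c
      have hmem : RingQuot.mkAlgHom ℂ (HomogRel L) (ι ℂ ((c, 0) : L × ℂ)) * w ∈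
          Set.range (fun a : Homog L => a * w) := ⟨_, rfl⟩
      rw [← hnormal] at hmem
      obtain ⟨x, hx⟩ := hmem
      have h2 := congrArg (fun a => homogPhi L a ((1 : ℂ), (0 : L × ℂ),
        ((0 : L ⊗[ℂ] L), (0 : L), (0 : ℂ)))) hx
      simp only [map_mul, Module.End.mul_apply, hφw, homogPhi_mk] at h2
      rw [homogLop_apply, homogLop_apply, homogLop_apply] at h2
      simp only [one_smul, map_zero, zero_smul] at h2
      -- h2 : (0, (φx e).1 • v, homogM v (φx e).2.1) = (0, 0, homogM (c,0) v)
      have h3 : homogM L v (homogPhi L x ((1 : ℂ), (0 : L × ℂ),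
          ((0 : L ⊗[ℂ] L), (0 : L), (0 : ℂ)))).2.1 = homogM L ((c, 0) : L × ℂ) v := by
        have := congrArg (fun q : HomogX L => q.2.2) h2
        simpa using this
      set u : L × ℂ := (homogPhi L x ((1 : ℂ), (0 : L × ℂ),
        ((0 : L ⊗[ℂ] L), (0 : L), (0 : ℂ)))).2.1 with hu
      rw [homogM_apply, homogM_apply] at h3
      rw [Prod.ext_iff, Prod.ext_iff] at h3
      obtain ⟨e1, e2, -⟩ := h3
      -- e1 : v.1 ⊗ u.1 + u.1 ⊗ v.1 = c ⊗ v.1 + v.1 ⊗ c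
      have hu1 : u.1 = c := by
        have hz : v.1 ⊗ₜ[ℂ] (u.1 - c) + (u.1 - c) ⊗ₜ[ℂ] v.1 = 0 := by
          rw [TensorProduct.tmul_sub, TensorProduct.sub_tmul]
          rw [show ((c,(0:ℂ)) : L × ℂ).1 = c from rfl] at e1
          abel_nf
          abel_nf at e1
          linear_combination (norm := abel_nf) e1
        exact sub_eq_zero.mp (tensor_cancel hb hz)
      refine ⟨u.2, ?_⟩
      have hsk : ⁅v.1, c⁆ = -⁅c, v.1⁆ := by rw [← lie_skew]
      simp only [hu1] at e2
      rw [hsk, zero_smul] at e2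
      linear_combination (norm := module) -e2
    have hI : ∀ (x m : L), m ∈ Submodule.span ℂ {v.1} → ⁅x, m⁆ ∈ Submodule.span ℂ {v.1} := by
      intro x m hm
      obtain ⟨t, rfl⟩ := Submodule.mem_span_singleton.mp hm
      obtain ⟨μ, hμ⟩ := key x
      rw [lie_smul, hμ, smul_smul]
      exact Submodule.smul_mem _ _ (Submodule.mem_span_singleton_self _)
    let I : LieIdeal ℂ L := { Submodule.span ℂ {v.1} with lie_mem := fun {x m} hm => hI x m hm }
    exact hL I (finrank_span_singleton hb)
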